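/- Let c ∈ ℝ, r > 0, ε > 0, a = r·α(ε), and let w, w′ ∈ [c−r, c+r] satisfy w + w′ ≤ 2c. Among all joint probability distributions of pairs (X, Y) of {c−a, c+a}-valued random variables with marginals P(X = c+a) = 1/2 + (w−c)/(2a) and P(Y = c+a) = 1/2 + (w′−c)/(2a), the mean squared error E[(X + Y − w − w′)²] is minimized by the distribution with P(X=c+a, Y=c+a) = 0, P(X=c−a, Y=c−a) = (2c−w−w′)/(2a), P(X=c+a, Y=c−a) = 1/2 + (w−c)/(2a), P(X=c−a, Y=c+a) = 1/2 + (w′−c)/(2a), and the minimum value equals 2r·α(ε)·(2c − w − w′) − (w + w′ − 2c)². -/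
import Mathlib


open Real Set

/-- `α(ε) = (e^ε + 1)/(e^ε − 1)`. -/
noncomputable def alphaFn (ε : ℝ) : ℝ := (Real.exp ε + 1) / (Real.exp ε - 1)

/-- The optimal joint pmf on `{c−a, c+a}²` (`true ↦ c+a`, `false ↦ c−a`) for `w + w' ≤ 2c`. -/
noncomputable def Popt (c a w w' : ℝ) (b b' : Bool) : ℝ :=
  if b then (if b' then 0 else 1 / 2 + (w - c) / (2 * a))
  else (if b' then 1 / 2 + (w' - c) / (2 * a) else (2 * c - w - w') / (2 * a))

/-- with `a = r·α(ε)` and `w + w' ≤ 2c`, among all joint distributions of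
`{c−a, c+a}`-valued pairs `(X, Y)` with marginals `P(X = c+a) = 1/2 + (w−c)/(2a)` and
`P(Y = c+a) = 1/2 + (w'−c)/(2a)`, the MSE `E[(X + Y − w − w')²]` is minimized by `Popt`,
which satisfies these constraints, and the minimum value is
`2rα(ε)(2c − w − w') − (w + w' − 2c)²`. -/
theorem stmt8 (c r ε : ℝ) (hr : 0 < r) (hε : 0 < ε)
    (w w' : ℝ) (hw : w ∈ Icc (c - r) (c + r)) (hw' : w' ∈ Icc (c - r) (c + r))
    (hsum : w + w' ≤ 2 * c) :
    (∀ b b' : Bool, 0 ≤ Popt c (r * alphaFn ε) w w' b b') ∧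
    (∑ b : Bool, ∑ b' : Bool, Popt c (r * alphaFn ε) w w' b b') = 1 ∧
    (∑ b' : Bool, Popt c (r * alphaFn ε) w w' true b') =
      1 / 2 + (w - c) / (2 * (r * alphaFn ε)) ∧
    (∑ b : Bool, Popt c (r * alphaFn ε) w w' b true) =
      1 / 2 + (w' - c) / (2 * (r * alphaFn ε)) ∧
    (∑ b : Bool, ∑ b' : Bool, Popt c (r * alphaFn ε) w w' b b' *
        ((if b then c + r * alphaFn ε else c - r * alphaFn ε) +
          (if b' then c + r * alphaFn ε else c - r * alphaFn ε) - w - w') ^ 2) =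
      2 * r * alphaFn ε * (2 * c - w - w') - (w + w' - 2 * c) ^ 2 ∧
    ∀ P : Bool → Bool → ℝ,
      (∀ b b' : Bool, 0 ≤ P b b') →
      (∑ b : Bool, ∑ b' : Bool, P b b') = 1 →
      (∑ b' : Bool, P true b') = 1 / 2 + (w - c) / (2 * (r * alphaFn ε)) →
      (∑ b : Bool, P b true) = 1 / 2 + (w' - c) / (2 * (r * alphaFn ε)) →
      2 * r * alphaFn ε * (2 * c - w - w') - (w + w' - 2 * c) ^ 2 ≤
        ∑ b : Bool, ∑ b' : Bool, P b b' *
          ((if b then c + r * alphaFn ε else c - r * alphaFn ε) +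
            (if b' then c + r * alphaFn ε else c - r * alphaFn ε) - w - w') ^ 2 := by
  have hexp : 1 < Real.exp ε := by
    have := Real.exp_lt_exp.mpr hε
    simpa using this
  have halpha : 1 < alphaFn ε := by
    rw [alphaFn, lt_div_iff₀ (by linarith)]; linarith
  set a := r * alphaFn ε with ha_def
  have har : r < a := by nlinarith
  have ha : 0 < a := lt_trans hr har
  have ha' : a ≠ 0 := ne_of_gt ha
  obtain ⟨hw1, hw2⟩ := hw
  obtain ⟨hw1', hw2'⟩ := hw'
  have h1 : (0:ℝ) ≤ 1 / 2 + (w - c) / (2 * a) := by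
    have h : (0:ℝ) ≤ (a + (w - c)) / (2 * a) :=
      div_nonneg (by linarith) (by linarith)
    calc (0:ℝ) ≤ (a + (w - c)) / (2 * a) := h
      _ = 1 / 2 + (w - c) / (2 * a) := by field_simp
  have h2 : (0:ℝ) ≤ 1 / 2 + (w' - c) / (2 * a) := by
    have h : (0:ℝ) ≤ (a + (w' - c)) / (2 * a) :=
      div_nonneg (by linarith) (by linarith)
    calc (0:ℝ) ≤ (a + (w' - c)) / (2 * a) := h
      _ = 1 / 2 + (w' - c) / (2 * a) := by field_simp
  have h3 : (0:ℝ) ≤ (2 * c - w - w') / (2 * a) :=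
    div_nonneg (by linarith) (by linarith)
  refine ⟨?_, ?_, ?_, ?_, ?_, ?_⟩
  · intro b b'
    cases b <;> cases b' <;>
      simp only [Popt, ite_true, ite_false, Bool.false_eq_true, le_refl] <;>
      linarith
  · simp only [Fintype.sum_bool, Popt, ite_true, ite_false, Bool.false_eq_true]
    field_simp
    ring
  · simp only [Fintype.sum_bool, Popt, ite_true, ite_false, Bool.false_eq_true]
    ring
  · simp only [Fintype.sum_bool, Popt, ite_true, ite_false, Bool.false_eq_true]
    ring
  · simp only [Fintype.sum_bool, Popt, ite_true, ite_false, Bool.false_eq_true]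
    field_simp
    ring
  · intro P hP hsum1 hm1 hm2
    simp only [Fintype.sum_bool, ite_true, ite_false, Bool.false_eq_true]
      at hsum1 hm1 hm2 ⊢
    field_simp at hm1 hm2
    have hp : 0 ≤ 8 * a ^ 2 * P true true :=
      mul_nonneg (by positivity) (hP true true)
    have key : P true true * (c + a + (c + a) - w - w') ^ 2 +
        P true false * (c + a + (c - a) - w - w') ^ 2 +
        (P false true * (c - a + (c + a) - w - w') ^ 2 +
          P false false * (c - a + (c - a) - w - w') ^ 2) -
        (2 * a * (2 * c - w - w') - (w + w' - 2 * c) ^ 2) =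
        8 * a ^ 2 * P true true := by
      linear_combination (2 * (2 * c - w - w') - 2 * a) * hm1 +
        (2 * (2 * c - w - w') - 2 * a) * hm2 +
        ((2 * c - w - w') - 2 * a) ^ 2 * hsum1
    have haa : 2 * r * alphaFn ε * (2 * c - w - w') = 2 * a * (2 * c - w - w') := by
      rw [ha_def]; ring
    linarith [key, hp, haa]
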